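/- Define h : ℕ∖{0} → c₀ by h(n) = 2^{-k} e_k for n ∈ [2^k, 2^{k+1}), where e_k is the k-th standard unit vector of c₀. Then for every A ⊆ ℕ∖{0}, the family (h n)_{n∈A} is unconditionally convergent in c₀ if and only if |A ∩ [1,n]|/n → 0 as n → ∞; that is, the ideal represented by h in c₀ is the density zero ideal 𝒵. -/

import Mathlib

open Filter Topology ZeroAtInfty

/-- The `k`-th standard unit vector of `c₀`. -/
noncomputable def stdBasis (k : ℕ) : C₀(ℕ, ℝ) :=
  ⟨⟨fun m => if m = k then 1 else 0, continuous_of_discreteTopology⟩, by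
    rw [cocompact_eq_atTop]
    refine Tendsto.congr' ?_ tendsto_const_nhds
    filter_upwards [eventually_gt_atTop k] with m hm
    simp [hm.ne']⟩

/-- `h n = 2^{-k} e_k` for `n ∈ [2^k, 2^{k+1})`. -/
noncomputable def hseq (n : ℕ) : C₀(ℕ, ℝ) :=
  ((1 / 2 : ℝ) ^ (Nat.log 2 n)) • stdBasis (Nat.log 2 n)

namespace Stmt19Aux

lemma c0_apply_le_norm (f : C₀(ℕ, ℝ)) (m : ℕ) : |f m| ≤ ‖f‖ := by
  rw [← ZeroAtInftyContinuousMap.norm_toBCF_eq_norm]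
  exact f.toBCF.norm_coe_le_norm m

lemma c0_norm_le {f : C₀(ℕ, ℝ)} {C : ℝ} (hC : 0 ≤ C) (h : ∀ m, |f m| ≤ C) : ‖f‖ ≤ C := by
  rw [← ZeroAtInftyContinuousMap.norm_toBCF_eq_norm]
  exact (BoundedContinuousFunction.norm_le hC).mpr h

def evalHom (m : ℕ) : C₀(ℕ, ℝ) →+ ℝ where
  toFun f := f m
  map_zero' := rfl
  map_add' _ _ := rfl

lemma c0_sum_apply {ι : Type*} (t : Finset ι) (f : ι → C₀(ℕ, ℝ)) (m : ℕ) :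
    (∑ i ∈ t, f i) m = ∑ i ∈ t, f i m := map_sum (evalHom m) f t

lemma hseq_apply (n m : ℕ) :
    hseq n m = if Nat.log 2 n = m then (1/2:ℝ)^m else 0 := by
  rcases eq_or_ne (Nat.log 2 n) m with h | h
  · subst h; simp [hseq, stdBasis]
  · simp [hseq, stdBasis, h, Ne.symm h]

lemma sum_apply_eq {A : Set ℕ} (t : Finset A) (m : ℕ) :
    (∑ n ∈ t, hseq (n:ℕ)) m
      = ((t.filter (fun n : A => Nat.log 2 (n:ℕ) = m)).card : ℝ) * (1/2:ℝ)^m := by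
  classical
  rw [c0_sum_apply]
  calc ∑ i ∈ t, hseq (i:ℕ) m
      = ∑ i ∈ t, (if Nat.log 2 (i:ℕ) = m then (1/2:ℝ)^m else 0) :=
        Finset.sum_congr rfl fun n _ => hseq_apply _ m
    _ = _ := by rw [← Finset.sum_filter, Finset.sum_const, nsmul_eq_mul]

/-- block `k` of `A`. -/
def Bk (A : Set ℕ) (k : ℕ) : Set ℕ := A ∩ Set.Ico (2^k) (2^(k+1))

lemma Bk_finite (A : Set ℕ) (k : ℕ) : (Bk A k).Finite :=
  (Set.finite_Ico _ _).subset Set.inter_subset_right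

/-- block counts scaled. -/
noncomputable def ck (A : Set ℕ) (k : ℕ) : ℝ := ((Bk A k).ncard : ℝ) * (1/2:ℝ)^k

lemma ck_nonneg (A : Set ℕ) (k : ℕ) : 0 ≤ ck A k := by
  unfold ck; positivity

lemma mem_Bk {A : Set ℕ} {n : ℕ} (hn : n ∈ A) (h0 : n ≠ 0) : n ∈ Bk A (Nat.log 2 n) :=
  ⟨hn, Nat.pow_log_le_self 2 h0, Nat.lt_pow_succ_log_self one_lt_two n⟩

lemma filter_card_le {A : Set ℕ} (hA : 0 ∉ A) (t : Finset A) (m : ℕ) :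
    (t.filter (fun n : A => Nat.log 2 (n:ℕ) = m)).card ≤ (Bk A m).ncard := by
  classical
  rw [Set.ncard_eq_toFinset_card _ (Bk_finite A m)]
  · refine Finset.card_le_card_of_injOn (fun n => (n:ℕ)) ?_ ?_
    · intro n hn
      rw [Finset.mem_coe, Finset.mem_filter] at hn
      rw [Finset.mem_coe, Set.Finite.mem_toFinset]
      have h0 : (n:ℕ) ≠ 0 := fun h => hA (h ▸ n.2)
      exact hn.2 ▸ mem_Bk n.2 h0
    · exact fun a _ b _ h => Subtype.ext h

lemma ncard_biUnion_le (B : ℕ → Set ℕ) (_hfin : ∀ k, (B k).Finite) (m : ℕ) :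
    (⋃ k ∈ Finset.range m, B k).ncard ≤ ∑ k ∈ Finset.range m, (B k).ncard := by
  induction m with
  | zero => simp
  | succ m ih =>
    have he : (⋃ k ∈ Finset.range (m+1), B k) = (⋃ k ∈ Finset.range m, B k) ∪ B m := by
      rw [Finset.range_add_one]
      simp [Set.union_comm]
    rw [he, Finset.sum_range_succ]
    exact le_trans (Set.ncard_union_le _ _) (by omega)

lemma summable_iff_ck {A : Set ℕ} (hA : 0 ∉ A) :
    (Summable fun n : A => hseq n) ↔ Tendsto (ck A) atTop (𝓝 0) := by
  classical
  rw [summable_iff_vanishing_norm, Metric.tendsto_atTop]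
  constructor
  · intro h ε hε
    obtain ⟨s, hs⟩ := h ε hε
    refine ⟨(s.sup fun n => (n:ℕ)) + 1, fun k hk => ?_⟩
    have hfinS : {n : A | (n:ℕ) ∈ Set.Ico (2^k) (2^(k+1))}.Finite :=
      Set.Finite.preimage (Set.injOn_of_injective Subtype.val_injective)
        (Set.finite_Ico _ _)
    set t := hfinS.toFinset with ht
    have hmem : ∀ n : A, n ∈ t ↔ 2^k ≤ (n:ℕ) ∧ (n:ℕ) < 2^(k+1) := by
      intro n; rw [ht, Set.Finite.mem_toFinset]; exact Iff.rfl
    have hdisj : Disjoint t s := by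
      rw [Finset.disjoint_left]
      intro n hn hns
      have h1 : 2^k ≤ (n:ℕ) := ((hmem n).mp hn).1
      have h2 : (n:ℕ) ≤ s.sup fun n => (n:ℕ) := Finset.le_sup hns
      have h3 : (s.sup fun n => (n:ℕ)) < 2^k :=
        lt_of_lt_of_le Nat.lt_two_pow_self
          (Nat.pow_le_pow_right (by norm_num) (by omega))
      omega
    have hnorm := hs t hdisj
    have hfilter : t.filter (fun n : A => Nat.log 2 (n:ℕ) = k) = t := by
      apply Finset.filter_true_of_mem
      intro n hn
      obtain ⟨h1, h2⟩ := (hmem n).mp hn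
      exact Nat.log_eq_of_pow_le_of_lt_pow h1 h2
    have hcard : (t.card : ℝ) = ((Bk A k).ncard : ℝ) := by
      congr 1
      have himg : Subtype.val '' {n : A | (n:ℕ) ∈ Set.Ico (2^k) (2^(k+1))} = Bk A k := by
        ext x
        constructor
        · rintro ⟨n, hn, rfl⟩; exact ⟨n.2, hn⟩
        · rintro ⟨hxA, hx⟩; exact ⟨⟨x, hxA⟩, hx, rfl⟩
      rw [← himg, Set.ncard_image_of_injective _ Subtype.val_injective,
        Set.ncard_eq_toFinset_card _ hfinS]
    have heval : (∑ n ∈ t, hseq (n:ℕ)) k = ck A k := by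
      rw [sum_apply_eq, hfilter, ck, hcard]
    have hle : ck A k ≤ ‖∑ n ∈ t, hseq (n:ℕ)‖ := by
      rw [← heval]; exact le_trans (le_abs_self _) (c0_apply_le_norm _ k)
    rw [Real.dist_eq, sub_zero, abs_of_nonneg (ck_nonneg A k)]
    exact lt_of_le_of_lt hle hnorm
  · intro h ε hε
    obtain ⟨K, hK⟩ := h (ε/2) (by positivity)
    have hfins : {n : A | (n:ℕ) < 2^K}.Finite :=
      Set.Finite.preimage (Set.injOn_of_injective Subtype.val_injective)
        (Set.finite_Iio _)
    refine ⟨hfins.toFinset, fun t htdisj => ?_⟩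
    have hbound : ‖∑ n ∈ t, hseq (n:ℕ)‖ ≤ ε/2 := by
      apply c0_norm_le (by positivity)
      intro m
      rw [sum_apply_eq, abs_of_nonneg (by positivity)]
      rcases (t.filter (fun n : A => Nat.log 2 (n:ℕ) = m)).eq_empty_or_nonempty with he | hne
      · rw [he]; simp; positivity
      · obtain ⟨n, hn⟩ := hne
        rw [Finset.mem_filter] at hn
        have h2K : 2^K ≤ (n:ℕ) := by
          by_contra hc
          have hmem : n ∈ hfins.toFinset := by
            rw [Set.Finite.mem_toFinset]; exact lt_of_not_ge hc
          exact (Finset.disjoint_left.mp htdisj hn.1) hmem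
        have h0 : (n:ℕ) ≠ 0 := fun hz => hA (hz ▸ n.2)
        have hKm : K ≤ m := hn.2 ▸ (Nat.le_log_iff_pow_le one_lt_two h0).mpr h2K
        have hck := hK m hKm
        rw [Real.dist_eq, sub_zero, abs_of_nonneg (ck_nonneg A m)] at hck
        calc ((t.filter (fun n : A => Nat.log 2 (n:ℕ) = m)).card : ℝ) * (1/2:ℝ)^m
            ≤ ((Bk A m).ncard : ℝ) * (1/2:ℝ)^m := by
              gcongr
              exact_mod_cast filter_card_le hA t m
          _ = ck A m := rfl
          _ ≤ ε/2 := le_of_lt hck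
    exact lt_of_le_of_lt hbound (half_lt_self hε)

lemma ck_tendsto_iff {A : Set ℕ} (hA : 0 ∉ A) :
    Tendsto (ck A) atTop (𝓝 0) ↔
      Tendsto (fun n : ℕ => ((A ∩ Set.Icc 1 n).ncard : ℝ) / n) atTop (𝓝 0) := by
  constructor
  · intro h
    rw [Metric.tendsto_atTop] at h ⊢
    intro ε hε
    obtain ⟨J, hJ⟩ := h (ε/4) (by positivity)
    set C : ℝ := ∑ k ∈ Finset.range J, ((Bk A k).ncard : ℝ) with hC
    obtain ⟨N₂, hN₂⟩ := Metric.tendsto_atTop.mp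
      (tendsto_const_div_atTop_nhds_zero_nat C) (ε/2) (by positivity)
    refine ⟨max (2^J) N₂, fun n hn => ?_⟩
    have hn2J : 2^J ≤ n := le_trans (le_max_left _ _) hn
    have hnN₂ : N₂ ≤ n := le_trans (le_max_right _ _) hn
    have hn0 : n ≠ 0 := by
      have := Nat.one_le_two_pow (n := J); omega
    set K := Nat.log 2 n with hKdef
    have hJK : J ≤ K := (Nat.le_log_iff_pow_le one_lt_two hn0).mpr hn2J
    -- Step 1 : counting
    have hstep1 : (A ∩ Set.Icc 1 n).ncard ≤ ∑ k ∈ Finset.range (K+1), (Bk A k).ncard := by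
      have hsub : A ∩ Set.Icc 1 n ⊆ ⋃ k ∈ Finset.range (K+1), Bk A k := by
        rintro x ⟨hxA, hx1, hxn⟩
        have hx0 : x ≠ 0 := by omega
        exact Set.mem_iUnion₂.mpr ⟨Nat.log 2 x,
          Finset.mem_range.mpr (Nat.lt_succ_of_le (Nat.log_mono_right hxn)),
          mem_Bk hxA hx0⟩
      have hfinU : (⋃ k ∈ Finset.range (K+1), Bk A k).Finite :=
        Set.Finite.biUnion (Finset.finite_toSet _) fun k _ => Bk_finite A k
      exact le_trans (Set.ncard_le_ncard hsub hfinU) (ncard_biUnion_le _ (Bk_finite A) _)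
    -- Step 2 : bounding the sum
    have hncard_eq : ∀ k, ((Bk A k).ncard : ℝ) = ck A k * 2^k := by
      intro k
      rw [ck, mul_assoc, ← mul_pow]
      norm_num
    have hstep2 : (∑ k ∈ Finset.range (K+1), ((Bk A k).ncard : ℝ)) ≤ C + ε/2 * n := by
      have hsplit : (∑ k ∈ Finset.range J, ((Bk A k).ncard : ℝ))
          + ∑ k ∈ Finset.Ico J (K+1), ((Bk A k).ncard : ℝ)
          = ∑ k ∈ Finset.range (K+1), ((Bk A k).ncard : ℝ) := by
        rw [Finset.range_eq_Ico, Finset.range_eq_Ico]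
        exact Finset.sum_Ico_consecutive (fun k => ((Bk A k).ncard : ℝ)) (Nat.zero_le J) (show J ≤ K+1 by omega)
      rw [← hsplit, ← hC]
      have htail : (∑ k ∈ Finset.Ico J (K+1), ((Bk A k).ncard : ℝ)) ≤ ε/2 * n := by
        have h1 : (∑ k ∈ Finset.Ico J (K+1), ((Bk A k).ncard : ℝ))
            ≤ ∑ k ∈ Finset.Ico J (K+1), ε/4 * 2^k := by
          apply Finset.sum_le_sum
          intro k hk
          rw [Finset.mem_Ico] at hk
          have hck := hJ k hk.1
          rw [Real.dist_eq, sub_zero, abs_of_nonneg (ck_nonneg A k)] at hck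
          rw [hncard_eq k]
          have h2k : (0:ℝ) ≤ 2^k := by positivity
          exact mul_le_mul_of_nonneg_right (le_of_lt hck) h2k
        have h2 : (∑ k ∈ Finset.Ico J (K+1), (ε/4) * (2:ℝ)^k)
            ≤ ε/4 * 2^(K+1) := by
          rw [← Finset.mul_sum]
          have h3 : (∑ k ∈ Finset.Ico J (K+1), (2:ℝ)^k)
              ≤ ∑ k ∈ Finset.range (K+1), (2:ℝ)^k := by
            apply Finset.sum_le_sum_of_subset_of_nonneg
            · rw [Finset.range_eq_Ico]
              exact Finset.Ico_subset_Ico (Nat.zero_le _) le_rfl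
            · intro k _ _; positivity
          have h4 : (∑ k ∈ Finset.range (K+1), (2:ℝ)^k) = 2^(K+1) - 1 := by
            rw [geom_sum_eq (by norm_num : (2:ℝ) ≠ 1)]
            norm_num
          have h5 : (0:ℝ) ≤ ε/4 := by positivity
          calc ε/4 * (∑ k ∈ Finset.Ico J (K+1), (2:ℝ)^k)
              ≤ ε/4 * (2^(K+1) - 1) := by
                apply mul_le_mul_of_nonneg_left _ h5
                rw [← h4]; exact h3
            _ ≤ ε/4 * 2^(K+1) := by nlinarith
        have h6 : ((2:ℝ)^K) ≤ n := by
          exact_mod_cast Nat.pow_log_le_self 2 hn0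
        have h7 : ε/4 * 2^(K+1) = ε/2 * 2^K := by ring
        calc (∑ k ∈ Finset.Ico J (K+1), ((Bk A k).ncard : ℝ))
            ≤ ε/4 * 2^(K+1) := le_trans h1 h2
          _ = ε/2 * 2^K := h7
          _ ≤ ε/2 * n := by
              apply mul_le_mul_of_nonneg_left h6 (by positivity)
      linarith
    -- conclude
    have hnpos : (0:ℝ) < n := by
      have : 0 < n := Nat.pos_of_ne_zero hn0
      exact_mod_cast this
    have hdn : ((A ∩ Set.Icc 1 n).ncard : ℝ) / n ≤ C/n + ε/2 := by
      have hnum : ((A ∩ Set.Icc 1 n).ncard : ℝ) ≤ C + ε/2 * n := by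
        refine le_trans ?_ hstep2
        exact_mod_cast hstep1
      calc ((A ∩ Set.Icc 1 n).ncard : ℝ) / n ≤ (C + ε/2 * n)/n := by gcongr
        _ = C/n + ε/2 := by
            rw [add_div, mul_div_assoc, div_self (ne_of_gt hnpos), mul_one]
    have hCn := hN₂ n hnN₂
    rw [Real.dist_eq, sub_zero] at hCn
    have hCn' : C / n < ε/2 := lt_of_le_of_lt (le_abs_self _) hCn
    rw [Real.dist_eq, sub_zero, abs_of_nonneg (by positivity)]
    linarith
  · intro h
    have hm : Tendsto (fun k : ℕ => 2^(k+1) - 1) atTop atTop := by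
      apply tendsto_atTop_mono (fun k => ?_) tendsto_id
      have h1 := Nat.lt_two_pow_self (n := k)
      have h2 : (2:ℕ)^k ≤ 2^(k+1) := Nat.pow_le_pow_right (by norm_num) (by omega)
      simp only [id_eq]
      omega
    have hcomp := h.comp hm
    have hlim : Tendsto (fun k : ℕ =>
        2 * (((A ∩ Set.Icc 1 (2^(k+1) - 1)).ncard : ℝ) / (2^(k+1) - 1 : ℕ)))
        atTop (𝓝 0) := by
      simpa using hcomp.const_mul 2
    apply squeeze_zero (ck_nonneg A) (fun k => ?_) hlim
    set m := 2^(k+1) - 1 with hmdef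
    have hm1 : 1 ≤ m := by
      have := Nat.one_lt_two_pow (n := k+1) (by omega); omega
    have hmle : m ≤ 2^(k+1) := by omega
    have hsub : Bk A k ⊆ A ∩ Set.Icc 1 m := by
      rintro x ⟨hxA, hx1, hx2⟩
      have h2k : 1 ≤ 2^k := Nat.one_le_two_pow
      exact ⟨hxA, by omega, by omega⟩
    have hcard : (Bk A k).ncard ≤ (A ∩ Set.Icc 1 m).ncard :=
      Set.ncard_le_ncard hsub ((Set.finite_Icc _ _).subset Set.inter_subset_right)
    have hmpos : (0:ℝ) < (m:ℕ) := by exact_mod_cast hm1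
    have hmleR : ((m:ℕ) : ℝ) ≤ 2^(k+1) := by
      calc ((m:ℕ) : ℝ) ≤ ((2^(k+1) : ℕ) : ℝ) := by exact_mod_cast hmle
        _ = 2^(k+1) := by push_cast; ring
    calc ck A k = ((Bk A k).ncard : ℝ) * (1/2:ℝ)^k := rfl
      _ ≤ ((A ∩ Set.Icc 1 m).ncard : ℝ) * (1/2:ℝ)^k := by
          apply mul_le_mul_of_nonneg_right _ (by positivity)
          exact_mod_cast hcard
      _ = 2 * (((A ∩ Set.Icc 1 m).ncard : ℝ) / 2^(k+1)) := by
          rw [one_div, inv_pow, pow_succ]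
          rw [div_eq_mul_inv, mul_inv]
          ring
      _ ≤ 2 * (((A ∩ Set.Icc 1 m).ncard : ℝ) / (m:ℕ)) := by
          apply mul_le_mul_of_nonneg_left _ (by norm_num : (0:ℝ) ≤ 2)
          exact div_le_div_of_nonneg_left (Nat.cast_nonneg _) hmpos hmleR

end Stmt19Aux

theorem stmt19 : ∀ A : Set ℕ, 0 ∉ A →
    ((Summable fun n : A => hseq n) ↔
      Tendsto (fun n : ℕ => ((A ∩ Set.Icc 1 n).ncard : ℝ) / n) atTop (𝓝 0)) := by
  intro A hA
  rw [Stmt19Aux.summable_iff_ck hA, Stmt19Aux.ck_tendsto_iff hA]
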